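/- With all nonnegativity constraints ξ_{j+3} ≥ 0 and the derivative constraint ξ_2 + sum_j c_j ξ_{j+3} ≤ 0 holding with c_j = ψ_j(1), the function f_ξ(x) = ξ_1 + ξ_2 x + sum_j ξ_{j+3} φ_j(x) is convex and nonincreasing on [0,1]. -/

import Mathlib

open MeasureTheory

/-- Hat basis function `h_j` on the grid `x_j = j/N`. -/
noncomputable def hat (N j : ℕ) (x : ℝ) : ℝ := max 0 (1 - N * |x - (j : ℝ) / N|)

/-- First antiderivative `ψ_j(x) = ∫_0^x h_j(t) dt`. -/
noncomputable def psi (N j : ℕ) (x : ℝ) : ℝ := ∫ t in (0 : ℝ)..x, hat N j t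

/-- Second antiderivative `φ_j(x) = ∫_0^x ψ_j(t) dt`. -/
noncomputable def phi (N j : ℕ) (x : ℝ) : ℝ := ∫ t in (0 : ℝ)..x, psi N j t

/-! `f_ξ'' = ∑ ξ_{j+3} h_j ≥ 0`, so `f_ξ'` is nondecreasing; hence `f_ξ` is convex, and
`f_ξ' ≤ f_ξ'(1) = ξ₂ + ∑ c_j ξ_{j+3} ≤ 0` on `[0,1]`, so `f_ξ` is nonincreasing there. -/

section DerivativeCriteria

variable {f f' : ℝ → ℝ}

theorem Monotone.convexOn_univ_of_hasDerivAt (hf : ∀ x, HasDerivAt f (f' x) x)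
    (hf' : Monotone f') : ConvexOn ℝ Set.univ f := by
  have hderiv : deriv f = f' := funext fun x => (hf x).deriv
  refine MonotoneOn.convexOn_of_deriv convex_univ
    (fun x _ => (hf x).continuousAt.continuousWithinAt)
    (fun x _ => (hf x).differentiableAt.differentiableWithinAt) ?_
  rw [hderiv]
  exact hf'.monotoneOn _

theorem Monotone.antitoneOn_Iic_of_hasDerivAt {b : ℝ} (hf : ∀ x, HasDerivAt f (f' x) x)
    (hf' : Monotone f') (hb : f' b ≤ 0) : AntitoneOn f (Set.Iic b) := by
  refine antitoneOn_of_hasDerivWithinAt_nonpos (convex_Iic b)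
    (fun x _ => (hf x).continuousAt.continuousWithinAt)
    (fun x _ => (hf x).hasDerivWithinAt) fun x hx => ?_
  rw [interior_Iic] at hx
  exact (hf' hx.le).trans hb

end DerivativeCriteria

section HatAntiderivatives

variable (N : ℕ)

theorem continuous_hat (j : ℕ) : Continuous (hat N j) := by
  unfold hat
  fun_prop

theorem hasDerivAt_psi (j : ℕ) (x : ℝ) : HasDerivAt (psi N j) (hat N j x) x :=
  ((continuous_hat N j).integral_hasStrictDerivAt 0 x).hasDerivAt

theorem monotone_psi (j : ℕ) : Monotone (psi N j) :=
  monotone_of_hasDerivAt_nonneg (hasDerivAt_psi N j) fun _ => le_max_left _ _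

theorem hasDerivAt_phi (j : ℕ) (x : ℝ) : HasDerivAt (phi N j) (psi N j x) x :=
  have hψ : Continuous (psi N j) := continuous_iff_continuousAt.2 fun y =>
    (hasDerivAt_psi N j y).continuousAt
  (hψ.integral_hasStrictDerivAt 0 x).hasDerivAt

variable (s : Finset ℕ) (a b : ℝ) (c : ℕ → ℝ)

theorem hasDerivAt_affine_add_sum_phi (x : ℝ) :
    HasDerivAt (fun x => a + b * x + ∑ j ∈ s, c j * phi N j x)
      (b + ∑ j ∈ s, c j * psi N j x) x := by
  have hlin : HasDerivAt (fun x => a + b * x) b x := by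
    simpa using ((hasDerivAt_id x).const_mul b).const_add a
  have hsum : HasDerivAt (fun x => ∑ j ∈ s, c j * phi N j x) (∑ j ∈ s, c j * psi N j x) x :=
    HasDerivAt.fun_sum fun j _ => (hasDerivAt_phi N j x).const_mul (c j)
  exact hlin.fun_add hsum

theorem monotone_const_add_sum_psi (hc : ∀ j ∈ s, 0 ≤ c j) :
    Monotone fun x => b + ∑ j ∈ s, c j * psi N j x := fun _ _ hxy =>
  add_le_add_right (Finset.sum_le_sum fun j hj =>
    mul_le_mul_of_nonneg_left (monotone_psi N j hxy) (hc j hj)) b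

end HatAntiderivatives

theorem constrained_model_convex_antitone_general (N : ℕ)
    (ξ₁ ξ₂ : ℝ) (ξ : ℕ → ℝ) (hpos : ∀ j ≤ N, 0 ≤ ξ (j + 3))
    (hslope : ξ₂ + ∑ j ∈ Finset.range (N + 1), psi N j 1 * ξ (j + 3) ≤ 0) :
    ConvexOn ℝ (Set.Icc (0 : ℝ) 1)
        (fun x => ξ₁ + ξ₂ * x + ∑ j ∈ Finset.range (N + 1), ξ (j + 3) * phi N j x) ∧
      AntitoneOn
        (fun x => ξ₁ + ξ₂ * x + ∑ j ∈ Finset.range (N + 1), ξ (j + 3) * phi N j x)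
        (Set.Icc (0 : ℝ) 1) := by
  have hc : ∀ j ∈ Finset.range (N + 1), 0 ≤ ξ (j + 3) := fun j hj =>
    hpos j (Nat.lt_succ_iff.mp (Finset.mem_range.mp hj))
  have hderiv := hasDerivAt_affine_add_sum_phi N (Finset.range (N + 1)) ξ₁ ξ₂ (ξ <| · + 3)
  have hmono := monotone_const_add_sum_psi N (Finset.range (N + 1)) ξ₂ (ξ <| · + 3) hc
  have hslope' : ξ₂ + ∑ j ∈ Finset.range (N + 1), ξ (j + 3) * psi N j 1 ≤ 0 := by
    simpa only [mul_comm] using hslope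
  exact ⟨(hmono.convexOn_univ_of_hasDerivAt hderiv).subset (Set.subset_univ _) (convex_Icc 0 1),
    (hmono.antitoneOn_Iic_of_hasDerivAt hderiv hslope').mono Set.Icc_subset_Iic_self⟩

/-- Under the nonnegativity and derivative constraints, `f_ξ` is convex and
nonincreasing on `[0,1]`. -/
theorem constrained_model_convex_antitone (N : ℕ) (hN : 1 ≤ N)
    (ξ₁ ξ₂ : ℝ) (ξ : ℕ → ℝ) (hpos : ∀ j ≤ N, 0 ≤ ξ (j + 3))
    (hslope : ξ₂ + ∑ j ∈ Finset.range (N + 1), psi N j 1 * ξ (j + 3) ≤ 0) :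
    ConvexOn ℝ (Set.Icc (0 : ℝ) 1)
        (fun x => ξ₁ + ξ₂ * x + ∑ j ∈ Finset.range (N + 1), ξ (j + 3) * phi N j x) ∧
      AntitoneOn
        (fun x => ξ₁ + ξ₂ * x + ∑ j ∈ Finset.range (N + 1), ξ (j + 3) * phi N j x)
        (Set.Icc (0 : ℝ) 1) :=
  constrained_model_convex_antitone_general N ξ₁ ξ₂ ξ hpos hslope
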